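/- For the bi-infinite periodic sequence A = \overline{2,1,1,2,2,2,1} ∈ {1,2}^ℤ (period 7, with a position j₀ where A_{j₀} = 2 is followed by 1,1,2,2,2,1), one has λ_{j₀}(A) = sup_{j∈ℤ} λ_j(A), i.e., the supremum of λ_j over all positions is attained at the position of the digit 2 preceding 1,1,2,2,2. -/

import Mathlib

/-!
The continued fraction `[a₀; a₁, …, a_{k-1}, t]` is the Möbius transform of `t` by the matrix
`M = ∏ [[aᵢ, 1], [1, 0]]`. For a `k`-periodic sequence the forward expansion `[B j; B (j+1), …]` is
therefore the positive fixed point of `M = [[p, q], [r, s]]`, the matrix of the block starting at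
`j`. The backward expansion `[0; B (j-1), B (j-2), …]` is the reciprocal of the fixed point of the
reversed block, whose matrix is `Mᵀ`. Adding the two gives `λ_j = √((p - s)² + 4qr) / r`.
The discriminant `(p - s)² + 4qr = tr² - 4 det` is the same for all rotations of the block
(here `18229`), so `λ_j` is largest where `r` is smallest, namely `r = 41` at `j = 0`.
-/

open Filter Topology

/-- Value of a finite continued fraction `[a₀; a₁, …, aₙ]` with natural-number entries
(the empty list has value 0, and a trailing `1/0 = 0` convention makes the recursion correct). -/
noncomputable def cfList : List ℕ → ℝ
  | [] => 0
  | a :: l => (a : ℝ) + 1 / cfList l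

/-- `n`-th convergent `[a 0; a 1, …, a n]` of the infinite continued fraction with entries `a`. -/
noncomputable def cfConvs (a : ℕ → ℕ) (n : ℕ) : ℝ :=
  cfList ((List.range (n + 1)).map a)

/-- `CFLim a x` : the infinite continued fraction `[a 0; a 1, a 2, …]` converges to `x`. -/
def CFLim (a : ℕ → ℕ) (x : ℝ) : Prop :=
  Tendsto (cfConvs a) atTop (nhds x)

/-- The eventually periodic sequence of partial quotients with preperiod `pre` and period `per`. -/
def epseq (pre per : List ℕ) : ℕ → ℕ :=
  fun n => if n < pre.length then pre.getD n 0 else per.getD ((n - pre.length) % per.length) 0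

/-- `IsLambda B j v` : for the bi-infinite sequence `B`,
`v = λ_j(B) = [B j; B (j+1), …] + [0; B (j-1), B (j-2), …]`. -/
def IsLambda (B : ℤ → ℕ) (j : ℤ) (v : ℝ) : Prop :=
  ∃ x y : ℝ,
    CFLim (fun n => B (j + n)) x ∧
    CFLim (fun n => if n = 0 then 0 else B (j - n)) y ∧
    v = x + y

/-- The bi-infinite periodic sequence `\overline{2,1,1,2,2,2,1}` (period 7),
positioned so that the digit at index 0 is the `2` followed by `1,1,2,2,2,1`. -/
def Aper : ℤ → ℕ := fun n => [2,1,1,2,2,2,1].getD (n % 7).toNat 0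

open Matrix Function

noncomputable def cfApp : List ℕ → ℝ → ℝ
  | [], t => t
  | a :: l, t => a + 1 / cfApp l t

lemma cfList_append (l m : List ℕ) : cfList (l ++ m) = cfApp l (cfList m) := by
  induction l with
  | nil => rfl
  | cons a l ih => simp only [List.cons_append, cfList, cfApp, ih]

lemma cfConvs_add (a : ℕ → ℕ) (k n : ℕ) :
    cfConvs a (k + n) = cfApp ((List.range k).map a) (cfConvs (fun i => a (k + i)) n) := by
  rw [cfConvs, cfConvs, Nat.add_assoc, List.range_add, List.map_append, cfList_append,
    List.map_map]
  rfl

lemma cfConvs_succ (a : ℕ → ℕ) (n : ℕ) :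
    cfConvs a (n + 1) = a 0 + 1 / cfConvs (fun i => a (1 + i)) n := by
  rw [Nat.add_comm, cfConvs_add]
  rfl

lemma cfList_nonneg : ∀ l : List ℕ, 0 ≤ cfList l
  | [] => le_rfl
  | a :: l => by
      have := cfList_nonneg l
      simp only [cfList]
      positivity

lemma one_le_cfConvs (a : ℕ → ℕ) (h : 1 ≤ a 0) (n : ℕ) : 1 ≤ cfConvs a n := by
  have h' : (1 : ℝ) ≤ a 0 := by exact_mod_cast h
  rw [cfConvs, List.range_succ_eq_map, List.map_cons, cfList]
  have := one_div_nonneg.2 (cfList_nonneg (((List.range n).map Nat.succ).map a))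
  linarith

lemma cfConvs_le (a : ℕ → ℕ) (h : 1 ≤ a 1) : ∀ n, cfConvs a n ≤ a 0 + 1
  | 0 => by simp [cfConvs, cfList]
  | n + 1 => by
      rw [cfConvs_succ]
      have h1 := one_le_cfConvs (fun i => a (1 + i)) h n
      have := div_le_one_of_le₀ h1 (by linarith)
      linarith

lemma CFLim.inv_of_zero_head {b : ℕ → ℕ} (h0 : b 0 = 0) (hpos : ∀ n, 1 ≤ b (1 + n)) {y : ℝ}
    (hy : CFLim b y) : CFLim (fun n => b (1 + n)) y⁻¹ := by
  set a := fun n => b (1 + n)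
  have hstep : ∀ n, cfConvs b (n + 1) = (cfConvs a n)⁻¹ := by
    intro n
    rw [cfConvs_succ, h0]
    simp [a]
  have hy' : Tendsto (fun n => (cfConvs a n)⁻¹) atTop (𝓝 y) := by
    have := hy.comp (tendsto_add_atTop_nat 1)
    simpa only [Function.comp_def, hstep] using this
  have hlow : ∀ n, ((a 0 : ℝ) + 1)⁻¹ ≤ (cfConvs a n)⁻¹ := fun n =>
    inv_anti₀ (by linarith [one_le_cfConvs a (hpos 0) n]) (cfConvs_le a (hpos 1) n)
  have hy0 : 0 < y := lt_of_lt_of_le (by positivity) (ge_of_tendsto' hy' hlow)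
  have := hy'.inv₀ hy0.ne'
  simp only [inv_inv] at this
  exact this

def cfMatrix (l : List ℕ) : Matrix (Fin 2) (Fin 2) ℕ := (l.map fun a => !![a, 1; 1, 0]).prod

lemma cfMatrix_cons (a : ℕ) (l : List ℕ) : cfMatrix (a :: l) = !![a, 1; 1, 0] * cfMatrix l := by
  rw [cfMatrix, List.map_cons, List.prod_cons, cfMatrix]

lemma cfMatrix_reverse (l : List ℕ) : cfMatrix l.reverse = (cfMatrix l)ᵀ := by
  rw [cfMatrix, cfMatrix, transpose_list_prod, List.map_map, List.map_reverse]
  congr 3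
  funext a
  ext i j
  fin_cases i <;> fin_cases j <;> rfl

noncomputable def mobius (M : Matrix (Fin 2) (Fin 2) ℕ) (t : ℝ) : ℝ :=
  (M 0 0 * t + M 0 1) / (M 1 0 * t + M 1 1)

lemma mobius_cfMatrix_num_den_pos (l : List ℕ) {t : ℝ} (ht : 0 < t) :
    0 < (cfMatrix l 0 0 : ℝ) * t + cfMatrix l 0 1 ∧
      0 < (cfMatrix l 1 0 : ℝ) * t + cfMatrix l 1 1 := by
  induction l with
  | nil => simp [cfMatrix, ht]
  | cons a l ih =>
      simp only [cfMatrix_cons, mul_apply, Fin.sum_univ_two, of_apply, cons_val', cons_val_zero,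
        cons_val_one, empty_val', cons_val_fin_one, one_mul, zero_mul, add_zero]
      push_cast
      obtain ⟨h1, h2⟩ := ih
      constructor <;> nlinarith [(Nat.cast_nonneg a : (0 : ℝ) ≤ a)]

lemma cfApp_eq_mobius (l : List ℕ) {t : ℝ} (ht : 0 < t) : cfApp l t = mobius (cfMatrix l) t := by
  induction l with
  | nil => simp [cfApp, cfMatrix, mobius]
  | cons a l ih =>
      obtain ⟨h1, h2⟩ := mobius_cfMatrix_num_den_pos l ht
      rw [cfApp, ih, mobius, mobius, cfMatrix_cons]
      simp only [mul_apply, Fin.sum_univ_two, of_apply, cons_val', cons_val_zero,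
        cons_val_one, empty_val', cons_val_fin_one, one_mul, zero_mul, add_zero]
      push_cast
      field_simp
      ring

lemma eq_of_mobius_fixed {p q r s x : ℝ} (hq : 0 < q) (hr : 0 < r) (hs : 0 ≤ s) (hx : 0 < x)
    (h : x = (p * x + q) / (r * x + s)) : x = (p - s + √((p - s) ^ 2 + 4 * q * r)) / (2 * r) := by
  have hquad : r * x ^ 2 + (s - p) * x - q = 0 := by
    rw [eq_div_iff (by positivity)] at h
    linarith
  have hroot : √((p - s) ^ 2 + 4 * q * r) = 2 * r * x - (p - s) := by
    rw [Real.sqrt_eq_iff_mul_self_eq_of_pos (by nlinarith)]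
    nlinarith
  rw [hroot]
  field_simp
  ring

def mobiusDisc (M : Matrix (Fin 2) (Fin 2) ℕ) : ℤ :=
  ((M 0 0 : ℤ) - M 1 1) ^ 2 + 4 * M 0 1 * M 1 0

noncomputable def mobiusFix (M : Matrix (Fin 2) (Fin 2) ℕ) : ℝ :=
  (M 0 0 - M 1 1 + √(mobiusDisc M)) / (2 * M 1 0)

lemma CFLim.eq_mobiusFix_of_periodic {a : ℕ → ℕ} {k : ℕ} (hper : Periodic a k) (ha : 1 ≤ a 0)
    {M : Matrix (Fin 2) (Fin 2) ℕ} (hM : cfMatrix ((List.range k).map a) = M) (hq : 0 < M 0 1)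
    (hr : 0 < M 1 0) {x : ℝ} (hx : CFLim a x) : x = mobiusFix M := by
  have hstep : ∀ n, cfConvs a (n + k) = mobius M (cfConvs a n) := by
    intro n
    have hshift : (fun i => a (k + i)) = a := funext fun i => by rw [add_comm]; exact hper i
    rw [add_comm, cfConvs_add, hshift, cfApp_eq_mobius _ (by linarith [one_le_cfConvs a ha n]), hM]
  have hx1 : 1 ≤ x := ge_of_tendsto' hx (one_le_cfConvs a ha)
  have hden : (M 1 0 : ℝ) * x + M 1 1 ≠ 0 := by positivity
  have hfix : x = mobius M x := by
    refine tendsto_nhds_unique (hx.comp (tendsto_add_atTop_nat k)) ?_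
    simp only [Function.comp_def, hstep, mobius]
    exact ((hx.const_mul _).add_const _).div ((hx.const_mul _).add_const _) hden
  rw [mobius] at hfix
  rw [eq_of_mobius_fixed (by exact_mod_cast hq) (by exact_mod_cast hr) (by positivity)
    (by linarith) hfix, mobiusFix, mobiusDisc]
  push_cast
  ring_nf

lemma mobiusDisc_transpose (M : Matrix (Fin 2) (Fin 2) ℕ) : mobiusDisc Mᵀ = mobiusDisc M := by
  simp only [mobiusDisc, transpose_apply]
  ring

lemma mobiusFix_add_inv_mobiusFix_transpose {M : Matrix (Fin 2) (Fin 2) ℕ} (hq : 0 < M 0 1)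
    (hr : 0 < M 1 0) : mobiusFix M + (mobiusFix Mᵀ)⁻¹ = √(mobiusDisc M) / M 1 0 := by
  have hq' : (0 : ℝ) < M 0 1 := by exact_mod_cast hq
  have hr' : (0 : ℝ) < M 1 0 := by exact_mod_cast hr
  set u : ℝ := M 0 0 - M 1 1
  set S := √(mobiusDisc M : ℝ)
  have hS : S ^ 2 = u ^ 2 + 4 * M 0 1 * M 1 0 := by
    rw [Real.sq_sqrt (by simp only [mobiusDisc]; push_cast; positivity)]
    simp only [mobiusDisc, u]
    push_cast
    ring
  have hpos : 0 < u + S := by nlinarith [Real.sqrt_nonneg (mobiusDisc M : ℝ)]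
  simp only [mobiusFix, mobiusDisc_transpose, transpose_apply]
  rw [show ((M 0 0 : ℝ) - M 1 1 + S) = u + S from rfl]
  field_simp
  nlinarith

def periodBlock (B : ℤ → ℕ) (k : ℕ) (j : ℤ) : List ℕ := (List.range k).map fun i : ℕ => B (j + i)

lemma periodBlock_emod {B : ℤ → ℕ} {k : ℕ} (hper : Periodic B k) (j : ℤ) :
    periodBlock B k (j % k) = periodBlock B k j := by
  refine List.map_congr_left fun i _ => ?_
  rw [Int.emod_def, sub_add_eq_add_sub, mul_comm, ← smul_eq_mul, hper.sub_zsmul_eq]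

lemma reverse_periodBlock {B : ℤ → ℕ} {k : ℕ} (hper : Periodic B k) (j : ℤ) :
    (periodBlock B k j).reverse = (List.range k).map fun i : ℕ => B (j - 1 - i) := by
  have hshift : periodBlock B k j = periodBlock B k (j - k) :=
    List.map_congr_left fun i _ => by rw [sub_add_eq_add_sub, hper.sub_eq]
  rw [hshift, periodBlock, ← List.map_reverse, List.range_eq_range', List.reverse_range',
    List.map_map, ← List.range_eq_range']
  refine List.map_congr_left fun i hi => ?_
  have := List.mem_range.1 hi
  simp only [Function.comp_apply]
  congr 1
  omega

theorem IsLambda.eq_of_periodic {B : ℤ → ℕ} {k : ℕ} (hper : Periodic B k) (hpos : ∀ i, 1 ≤ B i)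
    {j : ℤ} {M : Matrix (Fin 2) (Fin 2) ℕ} (hM : cfMatrix (periodBlock B k j) = M)
    (hq : 0 < M 0 1) (hr : 0 < M 1 0) {w : ℝ} (hw : IsLambda B j w) :
    w = √(mobiusDisc M) / M 1 0 := by
  obtain ⟨x, y, hx, hy, rfl⟩ := hw
  have hx' : x = mobiusFix M :=
    hx.eq_mobiusFix_of_periodic (fun n => by rw [Nat.cast_add, ← add_assoc]; exact hper _)
      (hpos _) hM hq hr
  have hback : CFLim (fun n => B (j - 1 - n)) y⁻¹ := by
    have := hy.inv_of_zero_head (by simp) (fun n => by simp [hpos])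
    convert this using 3 with n
    simp only [Nat.add_eq_zero_iff, one_ne_zero, false_and, if_false]
    congr 1
    push_cast
    ring
  have hy' : y⁻¹ = mobiusFix Mᵀ :=
    hback.eq_mobiusFix_of_periodic (fun n => by rw [Nat.cast_add, ← sub_sub]; exact hper.sub_eq _)
      (hpos _) (by rw [← reverse_periodBlock hper, cfMatrix_reverse, hM]) hr hq
  rw [hx', ← inv_inv y, hy', mobiusFix_add_inv_mobiusFix_transpose hq hr]

lemma Aper_periodic : Periodic Aper 7 := fun n => by simp [Aper]

lemma one_le_Aper (n : ℤ) : 1 ≤ Aper n := by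
  unfold Aper
  have hlt : (n % 7).toNat < 7 := by omega
  generalize (n % 7).toNat = m at hlt ⊢
  interval_cases m <;> decide

lemma cfMatrix_periodBlock_Aper {c : ℤ} (hc0 : 0 ≤ c) (hc7 : c < 7) :
    0 < cfMatrix (periodBlock Aper 7 c) 0 1 ∧ 41 ≤ cfMatrix (periodBlock Aper 7 c) 1 0 ∧
      mobiusDisc (cfMatrix (periodBlock Aper 7 c)) = 18229 := by
  interval_cases c <;> decide

lemma IsLambda.Aper_eq {j : ℤ} {w : ℝ} (hw : IsLambda Aper j w) :
    w = √18229 / cfMatrix (periodBlock Aper 7 (j % 7)) 1 0 := by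
  obtain ⟨hq, hr, hD⟩ := cfMatrix_periodBlock_Aper (Int.emod_nonneg j (by norm_num))
    (Int.emod_lt_of_pos j (by norm_num))
  have hM : cfMatrix (periodBlock Aper 7 j) = cfMatrix (periodBlock Aper 7 (j % 7)) :=
    congrArg cfMatrix (periodBlock_emod Aper_periodic j).symm
  rw [IsLambda.eq_of_periodic Aper_periodic one_le_Aper hM hq (by omega) hw, hD]
  norm_num

theorem stmt14 (v : ℝ) (hv : IsLambda Aper 0 v) :
    ∀ j : ℤ, ∀ w : ℝ, IsLambda Aper j w → w ≤ v := by
  intro j w hw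
  have hv41 : v = √18229 / 41 := by
    simpa [show cfMatrix (periodBlock Aper 7 0) 1 0 = 41 by decide] using hv.Aper_eq
  obtain ⟨-, h41, -⟩ := cfMatrix_periodBlock_Aper (Int.emod_nonneg j (by norm_num))
    (Int.emod_lt_of_pos j (by norm_num))
  rw [hw.Aper_eq, hv41]
  gcongr
  exact_mod_cast h41
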